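/- The space X[λ, μ, 𝒜, C̄] is zero-dimensional: each basic open set U((α,φ),η) and each set ⋃{X_γ : β < γ ≤ α} is clopen, so X has a base of clopen sets. -/

import Mathlib

/-!
The first coordinate `π : X → λ` is continuous for the order topology on `λ`: points of
cofinality `< μ` are isolated, and every other point `x` has basic neighbourhoods inside
`{x} ∪ π⁻¹ (δ, π x]` for any `δ < π x`. Hence `U(α,β) = π⁻¹ (β, α]` is clopen, and so is every
isolated point. The set `U((α,φ),η)` is closed for two reasons. A point `(α,ψ)` with `ψ ≠ φ` is
separated from it by `U((α,ψ),η')` with `η'` above the bounded set `M^φ ∩ M^ψ`. A point of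
cofinality `≥ μ` off the column `X_α` cannot be a limit of `C_α`, so it sits in a gap of `C_α`
and a left interval around it meets no column of `U((α,φ),η)`. Since the topology is generated
by these clopen sets, their finite intersections form a clopen base.
-/

open Set Ordinal Cardinal Topology

noncomputable section

namespace DSoukupPaper

/-- The set `S^λ_μ` of ordinals below `lam` of cofinality `mu`. -/
def Sset (lam : Ordinal.{0}) (mu : Cardinal.{0}) : Set Ordinal := {α | α < lam ∧ α.cof = mu}

/-- `C` is a club in the ordinal `o`. -/
def IsClubBelow (C : Set Ordinal.{0}) (o : Ordinal.{0}) : Prop :=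
  C ⊆ Set.Iio o ∧ (∀ β < o, ∃ γ ∈ C, β ≤ γ) ∧
    (∀ β < o, Order.IsSuccLimit β → (∀ γ < β, ∃ δ ∈ C, γ < δ ∧ δ < β) → β ∈ C)

/-- `A` is nonstationary in the ordinal `o`. -/
def IsNonstationaryBelow (A : Set Ordinal.{0}) (o : Ordinal.{0}) : Prop :=
  ∃ C : Set Ordinal, IsClubBelow C o ∧ ∀ x ∈ A, x ∉ C

/-- `A` is stationary in the ordinal `o`. -/
def IsStationaryBelow (A : Set Ordinal.{0}) (o : Ordinal.{0}) : Prop :=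
  ∀ C : Set Ordinal, IsClubBelow C o → ∃ x ∈ A, x ∈ C

/-- A `T₁` space is linearly D iff every nontrivial monotone open cover admits a
closed discrete big set (Guo–Junnila characterization, taken as definition). -/
def LinearlyDSpace (Y : Type*) [TopologicalSpace Y] : Prop :=
  ∀ 𝒰 : Set (Set Y), (∀ U ∈ 𝒰, IsOpen U) → ⋃₀ 𝒰 = Set.univ →
    IsChain (· ⊆ ·) 𝒰 → (∀ U ∈ 𝒰, U ≠ Set.univ) →
    ∃ D : Set Y, IsClosed D ∧ DiscreteTopology D ∧ ∀ U ∈ 𝒰, ¬D ⊆ U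

/-- The data of the construction `X[λ,μ,𝒜,C̄]`: cardinals `λ > μ = cf(μ)`,
a MAD family `𝒜 = {M^φ : φ < κ} ⊆ [μ]^μ`, and an `S^λ_μ`-club sequence
`C̄ = ⟨C_α : α ∈ S^λ_μ⟩`, given via increasing enumerations `a α : μ → C_α`. -/
structure Setup where
  lam : Cardinal.{0}
  mu : Cardinal.{0}
  kappa : Cardinal.{0}
  mu_reg : mu.IsRegular
  mu_lt_lam : mu < lam
  /-- the MAD family: `M φ` for `φ < κ` -/
  M : Ordinal.{0} → Set Ordinal.{0}
  M_sub : ∀ φ < kappa.ord, M φ ⊆ Set.Iio mu.ord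
  M_card : ∀ φ < kappa.ord, #(M φ) = Cardinal.lift.{1} mu
  M_ad : ∀ φ < kappa.ord, ∀ ψ < kappa.ord, φ ≠ ψ →
    #(↥(M φ ∩ M ψ)) < Cardinal.lift.{1} mu
  M_mad : ∀ N ⊆ Set.Iio mu.ord, #N = Cardinal.lift.{1} mu →
    ∃ φ < kappa.ord, #(↥(N ∩ M φ)) = Cardinal.lift.{1} mu
  /-- the club sequence: `a α ξ` is the `ξ`-th element of `C_α` -/
  a : Ordinal.{0} → Ordinal.{0} → Ordinal.{0}
  a_mono : ∀ α ∈ Sset lam.ord mu, ∀ ξ < mu.ord, ∀ ζ < ξ, a α ζ < a α ξ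
  a_lt : ∀ α ∈ Sset lam.ord mu, ∀ ξ < mu.ord, a α ξ < α
  a_unbounded : ∀ α ∈ Sset lam.ord mu, ∀ β < α, ∃ ξ < mu.ord, β ≤ a α ξ
  a_closed : ∀ α ∈ Sset lam.ord mu, ∀ ξ < mu.ord, Order.IsSuccLimit ξ →
    IsLUB (a α '' Set.Iio ξ) (a α ξ)

namespace Setup

variable (P : Setup)

/-- `C_α` as a set. -/
def C (α : Ordinal) : Set Ordinal := P.a α '' Set.Iio P.mu.ord

open Classical in
/-- the interval `I^ξ_α`. -/
def I (α ξ : Ordinal) : Set Ordinal :=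
  if Order.IsSuccLimit ξ then Set.Icc (P.a α ξ) (P.a α (ξ + 1)) else Set.Ioc (P.a α ξ) (P.a α (ξ + 1))

/-- the underlying set of the space: a subset of `λ × κ`. -/
def Xset : Set (Ordinal × Ordinal) :=
  {p | p.1 < P.lam.ord ∧
    ((p.1 ∈ Sset P.lam.ord P.mu ∧ p.2 < P.kappa.ord) ∨
      (p.1 ∉ Sset P.lam.ord P.mu ∧ p.2 = 0))}

/-- the column `X_α` (as a set of pairs). -/
def col (α : Ordinal) : Set (Ordinal × Ordinal) := {p ∈ P.Xset | p.1 = α}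

/-- basic neighborhood `U((α,φ),η)` for `α ∈ S^λ_μ`. -/
def U1 (α φ η : Ordinal) : Set (Ordinal × Ordinal) :=
  {(α, φ)} ∪ ⋃ γ ∈ (⋃ ξ ∈ {ξ | ξ ∈ P.M φ ∧ η ≤ ξ}, P.I α ξ), P.col γ

/-- basic neighborhood `U(α,β) = ⋃{X_γ : β < γ ≤ α}`. -/
def U3 (α β : Ordinal) : Set (Ordinal × Ordinal) := ⋃ γ ∈ Set.Ioc β α, P.col γ

/-- the collection of basic open sets. -/
def basics : Set (Set (Ordinal × Ordinal)) :=
  {B | (∃ α ∈ Sset P.lam.ord P.mu, ∃ φ < P.kappa.ord, ∃ η < P.mu.ord, B = P.U1 α φ η) ∨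
    (∃ α < P.lam.ord, α.cof < P.mu ∧ B = {(α, 0)}) ∨
    (∃ α < P.lam.ord, P.mu < α.cof ∧ ∃ β < α, B = P.U3 α β)}

/-- the topology of `X[λ,μ,𝒜,C̄]`, generated by the basic open sets. -/
instance instTopo : TopologicalSpace ↥P.Xset :=
  TopologicalSpace.generateFrom {V | ∃ B ∈ P.basics, V = Subtype.val ⁻¹' B}

/-- the column `X_α` viewed inside the space. -/
def colS (α : Ordinal) : Set ↥P.Xset := {x | (x : Ordinal × Ordinal).1 = α}

/-- the projection `π(F) = {α < λ : F ∩ X_α ≠ ∅}`. -/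
def pi (F : Set ↥P.Xset) : Set Ordinal := {α | ∃ x ∈ F, (x : Ordinal × Ordinal).1 = α}

/-- `F` is unbounded iff `π(F)` is unbounded in `λ`. -/
def Unbounded (F : Set ↥P.Xset) : Prop := ∀ β < P.lam.ord, ∃ γ ∈ P.pi F, β < γ

/-- `F` is high enough iff `|{α < λ : |F_α| = |F|}| ≥ μ`. -/
def HighEnough (F : Set ↥P.Xset) : Prop :=
  Cardinal.lift.{1} P.mu ≤ #({α | #(↥(F ∩ P.colS α)) = #F} : Set Ordinal)

end Setup
end DSoukupPaper


namespace DSoukupPaper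

theorem exists_lt_mem_upperBounds_of_mk_lt_cof {o : Ordinal.{u}} {S : Set Ordinal.{u}}
    (hS : ∀ ξ ∈ S, ξ < o) (h : #S < Cardinal.lift.{u + 1} o.cof) : ∃ b < o, b ∈ upperBounds S :=
  ⟨sSup S, sSup_lt_of_lt_cof (by rwa [← lift_cof]) hS,
    fun _ hξ => le_csSup ⟨o, fun ξ hξ => (hS ξ hξ).le⟩ hξ⟩

theorem exists_isClopen_subset_of_eq_generateFrom {Y : Type*} [t : TopologicalSpace Y]
    {s : Set (Set Y)} (ht : t = .generateFrom s) (hs : ∀ u ∈ s, IsClopen u) {V : Set Y}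
    (hV : IsOpen V) {x : Y} (hx : x ∈ V) : ∃ W, IsClopen W ∧ x ∈ W ∧ W ⊆ V := by
  obtain ⟨_, ⟨F, ⟨hF, hFs⟩, rfl⟩, hxF, hFV⟩ :=
    (TopologicalSpace.isTopologicalBasis_of_subbasis ht).exists_subset_of_mem_open hx hV
  refine ⟨⋂₀ F, ?_, hxF, hFV⟩
  rw [sInter_eq_biInter]
  exact hF.isClopen_biInter fun u hu => hs u (hFs hu)

namespace Setup

variable (P : Setup) {α β γ δ φ ψ η ξ ζ ρ : Ordinal.{0}}

theorem mu_ord_isSuccLimit : Order.IsSuccLimit P.mu.ord :=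
  isSuccLimit_ord P.mu_reg.aleph0_le

theorem add_one_lt_mu_ord (h : ξ < P.mu.ord) : ξ + 1 < P.mu.ord := by
  rw [← Order.succ_eq_add_one]
  exact P.mu_ord_isSuccLimit.succ_lt h

theorem isSuccLimit_of_mu_le_cof (h : P.mu ≤ γ.cof) : Order.IsSuccLimit γ :=
  one_lt_cof_iff.1 ((one_lt_aleph0.trans_le P.mu_reg.aleph0_le).trans_le h)

theorem a_le_a (hα : α ∈ Sset P.lam.ord P.mu) (hξ : ξ < P.mu.ord) (h : ζ ≤ ξ) :
    P.a α ζ ≤ P.a α ξ := by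
  rcases h.lt_or_eq with h | rfl
  exacts [(P.a_mono α hα ξ hξ ζ h).le, le_rfl]

theorem I_subset_Icc : P.I α ξ ⊆ Icc (P.a α ξ) (P.a α (ξ + 1)) := by
  unfold I
  split_ifs
  exacts [subset_rfl, Ioc_subset_Icc_self]

theorem Ioc_subset_I : Ioc (P.a α ξ) (P.a α (ξ + 1)) ⊆ P.I α ξ := by
  unfold I
  split_ifs
  exacts [Ioc_subset_Icc_self, subset_rfl]

theorem disjoint_I (hα : α ∈ Sset P.lam.ord P.mu) (hξ : ξ < P.mu.ord) (hζ : ζ < P.mu.ord)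
    (hne : ξ ≠ ζ) : Disjoint (P.I α ξ) (P.I α ζ) := by
  wlog hlt : ξ < ζ generalizing ξ ζ
  · exact (this hζ hξ hne.symm (hne.lt_or_gt.resolve_left hlt)).symm
  rw [Set.disjoint_left]
  intro ρ hρξ hρζ
  suffices P.a α (ξ + 1) < ρ from (P.I_subset_Icc hρξ).2.not_gt this
  rcases (Order.succ_le_of_lt hlt).lt_or_eq with h | h
  · rw [Order.succ_eq_add_one] at h
    exact (P.a_mono α hα ζ hζ _ h).trans_le (P.I_subset_Icc hρζ).1
  · rw [← h, I, if_neg (Order.not_isSuccLimit_succ ξ), Order.succ_eq_add_one] at hρζ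
    exact hρζ.1

/-- The indices of the columns that make up `U((α,φ),η)` apart from the point `(α,φ)`. -/
def U1Cols (α φ η : Ordinal) : Set Ordinal := ⋃ ξ ∈ {ξ | ξ ∈ P.M φ ∧ η ≤ ξ}, P.I α ξ

theorem mem_U1Cols : ρ ∈ P.U1Cols α φ η ↔ ∃ ξ ∈ P.M φ, η ≤ ξ ∧ ρ ∈ P.I α ξ := by
  simp [U1Cols, and_assoc]

theorem U1Cols_subset_Ico (hα : α ∈ Sset P.lam.ord P.mu) (hφ : φ < P.kappa.ord) :
    P.U1Cols α φ η ⊆ Ico (P.a α η) α := by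
  intro ρ hρ
  obtain ⟨ξ, hξM, hηξ, hρI⟩ := P.mem_U1Cols.1 hρ
  have hξ : ξ < P.mu.ord := P.M_sub φ hφ hξM
  obtain ⟨h1, h2⟩ := P.I_subset_Icc hρI
  exact ⟨(P.a_le_a hα hξ hηξ).trans h1, h2.trans_lt (P.a_lt α hα _ (P.add_one_lt_mu_ord hξ))⟩

theorem Ioc_subset_U1Cols (hα : α ∈ Sset P.lam.ord P.mu) (hφ : φ < P.kappa.ord)
    (hζ : ζ < P.mu.ord) (hρ : ρ ∈ Ioc (P.a α ζ) (P.a α (ζ + 1))) (hρC : ρ ∈ P.U1Cols α φ η) :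
    Ioc (P.a α ζ) (P.a α (ζ + 1)) ⊆ P.U1Cols α φ η := by
  obtain ⟨ξ, hξM, hηξ, hρI⟩ := P.mem_U1Cols.1 hρC
  obtain rfl : ξ = ζ := by
    by_contra hne
    exact (P.disjoint_I hα (P.M_sub φ hφ hξM) hζ hne).ne_of_mem hρI (P.Ioc_subset_I hρ) rfl
  exact fun σ hσ => P.mem_U1Cols.2 ⟨ξ, hξM, hηξ, P.Ioc_subset_I hσ⟩

theorem disjoint_U1Cols (hα : α ∈ Sset P.lam.ord P.mu) (hφ : φ < P.kappa.ord)
    (hψ : ψ < P.kappa.ord) (hη : ∀ ξ ∈ P.M φ ∩ P.M ψ, ξ < η) :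
    Disjoint (P.U1Cols α φ ζ) (P.U1Cols α ψ η) := by
  rw [Set.disjoint_left]
  intro ρ hρφ hρψ
  obtain ⟨ξ, hξφ, -, hρξ⟩ := P.mem_U1Cols.1 hρφ
  obtain ⟨ξ', hξ'ψ, hηξ', hρξ'⟩ := P.mem_U1Cols.1 hρψ
  obtain rfl : ξ = ξ' := by
    by_contra hne
    exact (P.disjoint_I hα (P.M_sub φ hφ hξφ) (P.M_sub ψ hψ hξ'ψ) hne).ne_of_mem hρξ hρξ' rfl
  exact (hη ξ ⟨hξφ, hξ'ψ⟩).not_ge hηξ'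

/-- A point of cofinality `≥ μ` is not a limit point of `C_α`, whose initial segments have size
`< μ`. -/
theorem exists_mem_Ioc_a (hα : α ∈ Sset P.lam.ord P.mu) (hγα : γ < α) (hγ : P.mu ≤ γ.cof) :
    γ ≤ P.a α 0 ∨ ∃ ζ < P.mu.ord, γ ∈ Ioc (P.a α ζ) (P.a α (ζ + 1)) := by
  by_contra! h
  obtain ⟨h0, hstep⟩ := h
  have hbelow : ∀ ζ < P.mu.ord, P.a α ζ < γ := by
    intro ζ
    induction ζ using WellFoundedLT.induction with | ind ζ ih => ?_
    intro hζ
    rcases zero_or_succ_or_isSuccLimit ζ with rfl | ⟨ζ, rfl⟩ | hlim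
    · exact h0
    · have hlt : ζ < Order.succ ζ := Order.lt_succ ζ
      refine not_le.1 fun hle => hstep ζ (hlt.trans hζ) ⟨ih ζ hlt (hlt.trans hζ), ?_⟩
      rwa [← Order.succ_eq_add_one]
    · have hcard : #(P.a α '' Iio ζ) < Cardinal.lift.{1} γ.cof :=
        calc #(P.a α '' Iio ζ) ≤ #(Iio ζ) := mk_image_le
          _ = Cardinal.lift.{1} ζ.card := Cardinal.mk_Iio_ordinal ζ
          _ < Cardinal.lift.{1} P.mu := Cardinal.lift_lt.2 (lt_ord.1 hζ)
          _ ≤ Cardinal.lift.{1} γ.cof := Cardinal.lift_le.2 hγ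
      obtain ⟨b, hbγ, hb⟩ := exists_lt_mem_upperBounds_of_mk_lt_cof
        (by rintro _ ⟨ξ, hξ, rfl⟩; exact ih ξ hξ (hξ.trans hζ)) hcard
      exact ((P.a_closed α hα ζ hζ hlim).2 hb).trans_lt hbγ
  obtain ⟨ξ, hξ, hγξ⟩ := P.a_unbounded α hα γ hγα
  exact (hbelow ξ hξ).not_ge hγξ

theorem exists_Ioc_subset_compl_insert_U1Cols (hα : α ∈ Sset P.lam.ord P.mu)
    (hφ : φ < P.kappa.ord) (hη : η < P.mu.ord) (hγα : γ ≠ α) (hγC : γ ∉ P.U1Cols α φ η)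
    (hγ : P.mu ≤ γ.cof) : ∃ δ < γ, Ioc δ γ ⊆ (insert α (P.U1Cols α φ η))ᶜ := by
  have hC := P.U1Cols_subset_Ico (η := η) hα hφ
  rcases hγα.lt_or_gt with hlt | hgt
  · rcases P.exists_mem_Ioc_a hα hlt hγ with h0 | ⟨ζ, hζ, hγI⟩
    · refine ⟨0, (P.isSuccLimit_of_mu_le_cof hγ).bot_lt, fun ρ hρ hρC => ?_⟩
      rcases hρC with rfl | hρC
      · exact hlt.not_ge hρ.2
      have hγρ : γ ≤ ρ := h0.trans ((P.a_le_a hα hη (zero_le (a := η))).trans (hC hρC).1)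
      exact hγC (le_antisymm hρ.2 hγρ ▸ hρC)
    · refine ⟨P.a α ζ, hγI.1, fun ρ hρ hρC => ?_⟩
      rcases hρC with rfl | hρC
      · exact hlt.not_ge hρ.2
      exact hγC (P.Ioc_subset_U1Cols hα hφ hζ ⟨hρ.1, hρ.2.trans hγI.2⟩ hρC hγI)
  · refine ⟨α, hgt, fun ρ hρ hρC => ?_⟩
    rcases hρC with rfl | hρC
    exacts [lt_irrefl _ hρ.1, (hρ.1.trans (hC hρC).2).false]

theorem snd_eq_zero (x : P.Xset) (h : x.1.1.cof ≠ P.mu) : x.1.2 = 0 :=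
  (x.2.2.resolve_left fun hx => h hx.1.2).2

theorem snd_lt_kappa_ord (x : P.Xset) (h : x.1.1.cof = P.mu) : x.1.2 < P.kappa.ord :=
  (x.2.2.resolve_right fun hx => hx.1 ⟨x.2.1, h⟩).2

theorem val_preimage_biUnion_col (K : Set Ordinal) :
    (Subtype.val ⁻¹' ⋃ γ ∈ K, P.col γ : Set P.Xset) = {x | x.1.1 ∈ K} := by
  ext x
  simp [col]

theorem val_preimage_U1 :
    (Subtype.val ⁻¹' P.U1 α φ η : Set P.Xset) =
      {x | x.1 = (α, φ)} ∪ {x | x.1.1 ∈ P.U1Cols α φ η} := by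
  rw [U1, preimage_union, ← val_preimage_biUnion_col]
  rfl

theorem val_preimage_U3 : (Subtype.val ⁻¹' P.U3 α β : Set P.Xset) = {x | x.1.1 ∈ Ioc β α} :=
  P.val_preimage_biUnion_col _

theorem val_preimage_singleton_of_cof_ne (h : α.cof ≠ P.mu) :
    (Subtype.val ⁻¹' {(α, 0)} : Set P.Xset) = {x | x.1.1 = α} := by
  ext x
  refine ⟨fun hx => congrArg Prod.fst hx, fun hx => Prod.ext hx (P.snd_eq_zero x (hx ▸ h))⟩

theorem isOpen_val_preimage {B : Set (Ordinal × Ordinal)} (hB : B ∈ P.basics) :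
    IsOpen (Subtype.val ⁻¹' B : Set P.Xset) :=
  TopologicalSpace.isOpen_generateFrom_of_mem ⟨B, hB, rfl⟩

theorem isOpen_singleton_of_cof_lt (x : P.Xset) (h : x.1.1.cof < P.mu) : IsOpen {x} := by
  have hx : x.1 = (x.1.1, 0) := Prod.ext rfl (P.snd_eq_zero x h.ne)
  have := P.isOpen_val_preimage (Or.inr (Or.inl ⟨x.1.1, x.2.1, h, rfl⟩))
  rwa [← hx, ← image_singleton, Subtype.val_injective.preimage_image] at this

theorem exists_isOpen_subset_Ioc (x : P.Xset) (hx : P.mu ≤ x.1.1.cof) (hδ : δ < x.1.1) :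
    ∃ W : Set P.Xset, IsOpen W ∧ x ∈ W ∧ ∀ y ∈ W, y = x ∨ y.1.1 ∈ Ioc δ x.1.1 := by
  rcases hx.eq_or_lt with hμ | hμ
  · have hα : x.1.1 ∈ Sset P.lam.ord P.mu := ⟨x.2.1, hμ.symm⟩
    have hψ := P.snd_lt_kappa_ord x hμ.symm
    obtain ⟨ξ, hξ, hδξ⟩ := P.a_unbounded _ hα δ hδ
    have hξ1 := P.add_one_lt_mu_ord hξ
    refine ⟨_, P.isOpen_val_preimage (Or.inl ⟨_, hα, _, hψ, ξ + 1, hξ1, rfl⟩), ?_, ?_⟩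
    · rw [val_preimage_U1]
      exact Or.inl rfl
    · rw [val_preimage_U1]
      rintro y (hy | hy)
      · exact Or.inl (Subtype.ext hy)
      · obtain ⟨h1, h2⟩ := P.U1Cols_subset_Ico hα hψ hy
        have hξ_lt := P.a_mono _ hα _ hξ1 ξ (lt_add_one ξ)
        exact Or.inr ⟨(hδξ.trans_lt hξ_lt).trans_le h1, h2.le⟩
  · refine ⟨_, P.isOpen_val_preimage (Or.inr (Or.inr ⟨_, x.2.1, hμ, δ, hδ, rfl⟩)), ?_, ?_⟩
    · rw [val_preimage_U3]
      exact ⟨hδ, le_rfl⟩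
    · rw [val_preimage_U3]
      exact fun y hy => Or.inr hy

theorem isOpen_setOf_fst_mem {K : Set Ordinal}
    (hK : ∀ γ ∈ K, P.mu ≤ γ.cof → ∃ δ < γ, Ioc δ γ ⊆ K) : IsOpen {x : P.Xset | x.1.1 ∈ K} := by
  rw [isOpen_iff_forall_mem_open]
  intro x hx
  rcases lt_or_ge x.1.1.cof P.mu with hcof | hcof
  · exact ⟨{x}, singleton_subset_iff.2 hx, P.isOpen_singleton_of_cof_lt x hcof, rfl⟩
  obtain ⟨δ, hδ, hδK⟩ := hK _ hx hcof
  obtain ⟨W, hW, hxW, hWx⟩ := P.exists_isOpen_subset_Ioc x hcof hδ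
  refine ⟨W, fun y hy => ?_, hW, hxW⟩
  rcases hWx y hy with rfl | hy
  exacts [hx, hδK hy]

theorem continuous_fst_val : Continuous fun x : P.Xset => x.1.1 := by
  refine continuous_def.2 fun K hK => P.isOpen_setOf_fst_mem fun γ hγ hcof => ?_
  obtain ⟨δ, hδ, hδK⟩ := SuccOrder.isOpen_iff.1 hK γ hγ (P.isSuccLimit_of_mu_le_cof hcof)
  refine ⟨δ, hδ, fun ρ hρ => ?_⟩
  rcases hρ.2.lt_or_eq with h | rfl
  exacts [hδK ⟨hρ.1, h⟩, hγ]

theorem isClopen_U3 : IsClopen (Subtype.val ⁻¹' P.U3 α β : Set P.Xset) := by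
  rw [val_preimage_U3]
  exact ⟨Order.Icc_succ_left β α ▸ isClosed_Icc.preimage P.continuous_fst_val,
    Order.Ioo_succ_right β α ▸ isOpen_Ioo.preimage P.continuous_fst_val⟩

theorem exists_isOpen_disjoint_U1 (hα : α ∈ Sset P.lam.ord P.mu) (hφ : φ < P.kappa.ord)
    (x : P.Xset) (hxα : x.1.1 = α) (hxφ : x.1 ≠ (α, φ)) :
    ∃ W : Set P.Xset, IsOpen W ∧ x ∈ W ∧ Disjoint W (Subtype.val ⁻¹' P.U1 α φ η) := by
  set ψ := x.1.2
  have hψ : ψ < P.kappa.ord := P.snd_lt_kappa_ord x (hxα ▸ hα.2)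
  have hψφ : ψ ≠ φ := fun h => hxφ (Prod.ext hxα h)
  obtain ⟨η₀, hη₀, hub⟩ := exists_lt_mem_upperBounds_of_mk_lt_cof (S := P.M ψ ∩ P.M φ)
    (fun ξ hξ => P.M_sub ψ hψ hξ.1)
    (by rw [P.mu_reg.cof_ord]; exact P.M_ad ψ hψ φ hφ hψφ)
  have hη₀1 := P.add_one_lt_mu_ord hη₀
  refine ⟨_, P.isOpen_val_preimage (Or.inl ⟨α, hα, ψ, hψ, η₀ + 1, hη₀1, rfl⟩), ?_, ?_⟩
  · rw [val_preimage_U1]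
    exact Or.inl (Prod.ext hxα rfl)
  have hCψ := P.disjoint_U1Cols hα hφ hψ (ζ := η) (η := η₀ + 1)
    fun ξ hξ => Order.lt_add_one_iff.2 (hub ⟨hξ.2, hξ.1⟩)
  rw [val_preimage_U1, val_preimage_U1, Set.disjoint_left]
  rintro y (hy | hy) (hy' | hy')
  · exact hψφ (congrArg Prod.snd (hy.symm.trans hy'))
  · exact (P.U1Cols_subset_Ico hα hφ hy').2.ne (congrArg Prod.fst hy)
  · exact (P.U1Cols_subset_Ico hα hψ hy).2.ne (congrArg Prod.fst hy')
  · exact hCψ.ne_of_mem hy' hy rfl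

theorem isClopen_U1 (hα : α ∈ Sset P.lam.ord P.mu) (hφ : φ < P.kappa.ord) (hη : η < P.mu.ord) :
    IsClopen (Subtype.val ⁻¹' P.U1 α φ η : Set P.Xset) := by
  refine ⟨?_, P.isOpen_val_preimage (Or.inl ⟨α, hα, φ, hφ, η, hη, rfl⟩)⟩
  rw [← isOpen_compl_iff, isOpen_iff_forall_mem_open]
  intro x hx
  rw [mem_compl_iff, val_preimage_U1, mem_union, not_or] at hx
  by_cases hxα : x.1.1 = α
  · obtain ⟨W, hW, hxW, hWU⟩ := P.exists_isOpen_disjoint_U1 (η := η) hα hφ x hxα hx.1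
    exact ⟨W, hWU.subset_compl_right, hW, hxW⟩
  refine ⟨{y | y.1.1 ∈ (insert α (P.U1Cols α φ η))ᶜ}, ?_, ?_, ?_⟩
  · rintro y hy hy'
    rw [val_preimage_U1] at hy'
    rcases hy' with hy' | hy'
    exacts [hy (Or.inl (congrArg Prod.fst hy')), hy (Or.inr hy')]
  · exact P.isOpen_setOf_fst_mem fun γ hγ hcof => P.exists_Ioc_subset_compl_insert_U1Cols
      hα hφ hη (fun h => hγ (Or.inl h)) (fun h => hγ (Or.inr h)) hcof
  · rintro (h | h)
    exacts [hxα h, hx.2 h]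

theorem isClopen_val_preimage_of_mem_basics {B : Set (Ordinal × Ordinal)} (hB : B ∈ P.basics) :
    IsClopen (Subtype.val ⁻¹' B : Set P.Xset) := by
  have hBopen := P.isOpen_val_preimage hB
  rcases hB with ⟨α, hα, φ, hφ, η, hη, rfl⟩ | ⟨α, -, hcof, rfl⟩ | ⟨α, -, -, β, -, rfl⟩
  · exact P.isClopen_U1 hα hφ hη
  · rw [P.val_preimage_singleton_of_cof_ne hcof.ne] at hBopen ⊢
    exact ⟨isClosed_singleton.preimage P.continuous_fst_val, hBopen⟩
  · exact P.isClopen_U3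

end Setup

/-- The space `X[λ,μ,𝒜,C̄]` is zero-dimensional: the basic sets `U((α,φ),η)` and the
sets `⋃{X_γ : β < γ ≤ α}` are clopen, so the space has a base of clopen sets. -/
theorem stmt8 (P : Setup) :
    (∀ α ∈ Sset P.lam.ord P.mu, ∀ φ < P.kappa.ord, ∀ η < P.mu.ord,
      IsClopen (Subtype.val ⁻¹' P.U1 α φ η : Set ↥P.Xset)) ∧
    (∀ α < P.lam.ord, ∀ β < α, IsClopen (Subtype.val ⁻¹' P.U3 α β : Set ↥P.Xset)) ∧
    (∀ V : Set ↥P.Xset, IsOpen V → ∀ x ∈ V,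
      ∃ W : Set ↥P.Xset, IsClopen W ∧ x ∈ W ∧ W ⊆ V) := by
  refine ⟨fun α hα φ hφ η hη => P.isClopen_U1 hα hφ hη, fun α _ β _ => P.isClopen_U3,
    fun V hV x hx => exists_isClopen_subset_of_eq_generateFrom rfl ?_ hV hx⟩
  rintro _ ⟨B, hB, rfl⟩
  exact P.isClopen_val_preimage_of_mem_basics hB

end DSoukupPaper
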